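/- For every α : Finset Q the following are equivalent: (0) α is tolerable; (1) H_α = G_α; (2) there exists a logical X operator λ with α ∩ λ ∈ S_Z; (3) there exists a logical X operator λ ∈ Z(G_α); (4) for every logical X operator λ, α Δ λ is not tolerable; (5) for every β ∈ S_X, α Δ β is tolerable. (Lemma 2, characterizations of tolerable errors.) -/

import Mathlib

open Finset
open scoped symmDiff Matrix

namespace CC

variable {Q : Type*} [Fintype Q] [DecidableEq Q]

/-- A subgroup of the abelian group `(Finset Q, ∆)`. -/
def IsSubgroup (S : Set (Finset Q)) : Prop :=
  ∅ ∈ S ∧ ∀ a ∈ S, ∀ b ∈ S, a ∆ b ∈ S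

/-- The subgroup of `(Finset Q, ∆)` generated by a set. -/
def closure (T : Set (Finset Q)) : Set (Finset Q) :=
  ⋂₀ {S : Set (Finset Q) | IsSubgroup S ∧ T ⊆ S}

/-- A CSS stabilizer code on the qubits `Q`. -/
structure CSS (Q : Type*) [Fintype Q] [DecidableEq Q] where
  SX : Set (Finset Q)
  SZ : Set (Finset Q)
  hSX : IsSubgroup SX
  hSZ : IsSubgroup SZ
  comm : ∀ a ∈ SZ, ∀ b ∈ SX, 2 ∣ (a ∩ b).card

def ZX (C : CSS Q) : Set (Finset Q) := {γ | ∀ f ∈ C.SZ, 2 ∣ (γ ∩ f).card}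

def ZZ (C : CSS Q) : Set (Finset Q) := {z | ∀ c ∈ C.SX, 2 ∣ (z ∩ c).card}

/-- Duality assumption. -/
def Dual (C : CSS Q) : Prop :=
  C.SZ = {z | ∀ γ ∈ ZX C, 2 ∣ (z ∩ γ).card} ∧
  C.SX = {c | ∀ z ∈ ZZ C, 2 ∣ (c ∩ z).card}

def LogicalX (C : CSS Q) (l : Finset Q) : Prop := l ∈ ZX C ∧ l ∉ C.SX

def LogicalZ (C : CSS Q) (l : Finset Q) : Prop := l ∈ ZZ C ∧ l ∉ C.SZ

/-- Single-logical-qubit assumption. -/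
def SingleQubit (C : CSS Q) : Prop :=
  (ZX C ≠ C.SX ∧ ∀ l l', LogicalX C l → LogicalX C l' → l ∆ l' ∈ C.SX) ∧
  (ZZ C ≠ C.SZ ∧ ∀ l l', LogicalZ C l → LogicalZ C l' → l ∆ l' ∈ C.SZ)

/-- Intersection axiom. -/
def Inter (C : CSS Q) : Prop :=
  ZZ C = {x | ∃ α ∈ ZX C, ∃ β ∈ ZX C, x = α ∩ β}

def G (C : CSS Q) (α : Finset Q) : Set (Finset Q) :=
  closure (C.SZ ∪ {x | ∃ β ∈ ZX C, x = α ∩ β})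

def H (C : CSS Q) (α : Finset Q) : Set (Finset Q) :=
  closure (C.SZ ∪ {x | ∃ β ∈ C.SX, x = α ∩ β})

def Zof (K : Set (Finset Q)) : Set (Finset Q) := {γ | ∀ h ∈ K, 2 ∣ (γ ∩ h).card}

def Tolerable (C : CSS Q) (α : Finset Q) : Prop := ∀ z ∈ G C α, ¬ LogicalZ C z

def g (b : Q → ℤ) (s : Finset Q) : ℤ := ∑ q ∈ s, b q

/-- T-invariance assumption. -/
def TInv (C : CSS Q) (b : Q → ℤ) : Prop :=
  (∀ β ∈ C.SX, (8 : ℤ) ∣ g b β) ∧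
  (∀ β ∈ C.SX, ∀ γ ∈ ZX C, (8 : ℤ) ∣ (g b β - 2 * g b (γ ∩ β)))

def E (C : CSS Q) (b : Q → ℤ) (α : Finset Q) : Set (Finset Q) :=
  {z | ∀ γ ∈ Zof (G C α), g b (γ ∩ α) ≡ 2 * ((z ∩ γ).card : ℤ) [ZMOD 4]}

/- Quantum setting -/

abbrev M (Q : Type*) [Fintype Q] [DecidableEq Q] :=
  Matrix (Q → ZMod 2) (Q → ZMod 2) ℂ

def supp (v : Q → ZMod 2) : Finset Q := Finset.univ.filter (fun q => v q = 1)

def ind (α : Finset Q) : Q → ZMod 2 := fun q => if q ∈ α then 1 else 0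

def XM (α : Finset Q) : M Q :=
  Matrix.of fun u v => if u = v + ind α then (1 : ℂ) else 0

noncomputable def ZM (α : Finset Q) : M Q :=
  Matrix.diagonal fun v => (-1 : ℂ) ^ (supp v ∩ α).card

noncomputable def AM (b : Q → ℤ) (α : Finset Q) : M Q :=
  Matrix.diagonal fun v => Complex.I ^ (g b (α ∩ supp v))

noncomputable def UM (b : Q → ℤ) : M Q :=
  Matrix.diagonal fun v => Complex.exp (Real.pi * Complex.I / 4) ^ (g b (supp v))

def Encoded (C : CSS Q) (ρ : M Q) : Prop :=
  ρ.trace = 1 ∧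
  (∀ c ∈ C.SX, XM c * ρ = ρ ∧ ρ * XM c = ρ) ∧
  (∀ f ∈ C.SZ, ZM f * ρ = ρ ∧ ρ * ZM f = ρ)

instance : Std.Commutative (α := Finset Q) (· ∆ ·) := ⟨symmDiff_comm⟩
instance : Std.Associative (α := Finset Q) (· ∆ ·) := ⟨symmDiff_assoc⟩

/-- Iterated symmetric difference over a finite index set. -/
def bigΔ {ι : Type*} (s : Finset ι) (f : ι → Finset Q) : Finset Q :=
  s.fold (· ∆ ·) ∅ f

/-!
Identified with `(ZMod 2)^Q`, `Finset Q` carries the dot product, for which `Z(K)` is the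
orthogonal complement of `K`; in finite dimension `Z(Z(K)) = K` for every subgroup `K`.

A logical `Z` operator has odd overlap with every logical `X` operator. By the intersection axiom
the cubic form `|a ∩ b ∩ c| mod 2` is odd on logical `X` operators, so `l ∩ l'` is a logical `Z`
operator whenever `l, l'` are logical `X` operators. Condition (2), `α ∩ l ∈ S_Z`, says that the
logical `X` operator `l` is orthogonal to `G_α`, hence to every logical `Z` operator in `G_α`.
Conversely, if no logical `X` operator is orthogonal to `G_α`, then `Z(G_α) ⊆ S_X`, and taking
annihilators `Z_Z = Z(S_X) ⊆ Z(Z(G_α)) = G_α`, so `G_α` contains a logical `Z` operator.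
-/

section General

variable {ι : Type*} [DecidableEq ι]

theorem inter_symmDiff_distrib_left (s t u : Finset ι) : s ∩ t ∆ u = (s ∩ t) ∆ (s ∩ u) :=
  inf_symmDiff_distrib_left s t u

theorem inter_symmDiff_distrib_right (s t u : Finset ι) : s ∆ t ∩ u = (s ∩ u) ∆ (t ∩ u) :=
  inf_symmDiff_distrib_right s t u

theorem card_symmDiff_add_two_mul_card_inter (s t : Finset ι) :
    #(s ∆ t) + 2 * #(s ∩ t) = #s + #t := by
  have hdisj : Disjoint (s ∆ t) (s ∩ t) := disjoint_symmDiff_inf s t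
  have hunion : s ∆ t ∪ s ∩ t = s ∪ t := symmDiff_sup_inf s t
  have := card_union_of_disjoint hdisj
  rw [hunion] at this
  linarith [card_union_add_card_inter s t]

theorem two_dvd_card_symmDiff_iff (s t : Finset ι) :
    2 ∣ #(s ∆ t) ↔ (2 ∣ #s ↔ 2 ∣ #t) := by
  have := card_symmDiff_add_two_mul_card_inter s t
  omega

theorem two_dvd_card_symmDiff_inter_iff (a b c : Finset ι) :
    2 ∣ #(a ∆ b ∩ c) ↔ (2 ∣ #(a ∩ c) ↔ 2 ∣ #(b ∩ c)) := by
  rw [inter_symmDiff_distrib_right, two_dvd_card_symmDiff_iff]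

theorem two_dvd_card_inter_symmDiff_iff (c a b : Finset ι) :
    2 ∣ #(c ∩ a ∆ b) ↔ (2 ∣ #(c ∩ a) ↔ 2 ∣ #(c ∩ b)) := by
  rw [inter_symmDiff_distrib_left, two_dvd_card_symmDiff_iff]

theorem subset_closure (T : Set (Finset ι)) : T ⊆ closure T :=
  fun _ ha _ hS => hS.2 ha

theorem closure_subset {T S : Set (Finset ι)} (hS : IsSubgroup S) (h : T ⊆ S) :
    closure T ⊆ S :=
  fun _ ha => ha S ⟨hS, h⟩

theorem isSubgroup_closure (T : Set (Finset ι)) : IsSubgroup (closure T) :=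
  ⟨fun _ hS => hS.1.1, fun _ ha _ hb S hS => hS.1.2 _ (ha S hS) _ (hb S hS)⟩

theorem closure_mono {T T' : Set (Finset ι)} (h : T ⊆ T') : closure T ⊆ closure T' :=
  closure_subset (isSubgroup_closure T') (h.trans (subset_closure T'))

theorem mem_closure_union_inter_iff {S B : Set (Finset ι)} (hS : IsSubgroup S)
    (hB : IsSubgroup B) {α z : Finset ι} :
    z ∈ closure (S ∪ {x | ∃ β ∈ B, x = α ∩ β}) ↔ ∃ s ∈ S, ∃ β ∈ B, z = s ∆ (α ∩ β) := by
  constructor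
  · refine fun hz => closure_subset (S := {z | ∃ s ∈ S, ∃ β ∈ B, z = s ∆ (α ∩ β)})
      ⟨⟨∅, hS.1, ∅, hB.1, by simp⟩, ?_⟩ ?_ hz
    · rintro _ ⟨s, hs, β, hβ, rfl⟩ _ ⟨s', hs', β', hβ', rfl⟩
      refine ⟨s ∆ s', hS.2 s hs s' hs', β ∆ β', hB.2 β hβ β' hβ', ?_⟩
      rw [inter_symmDiff_distrib_left, symmDiff_symmDiff_symmDiff_comm]
    · rintro x (hx | ⟨β, hβ, rfl⟩)
      · exact ⟨x, hx, ∅, hB.1, by rw [inter_empty]; exact (symmDiff_bot x).symm⟩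
      · exact ⟨∅, hS.1, β, hβ, (bot_symmDiff _).symm⟩
  · rintro ⟨s, hs, β, hβ, rfl⟩
    exact (isSubgroup_closure _).2 s (subset_closure _ (Or.inl hs))
      _ (subset_closure _ (Or.inr ⟨β, hβ, rfl⟩))

theorem isSubgroup_Zof (K : Set (Finset ι)) : IsSubgroup (Zof K) :=
  ⟨fun h _ => by simp, fun a ha b hb h hh =>
    (two_dvd_card_symmDiff_inter_iff a b h).2 (iff_of_true (ha h hh) (hb h hh))⟩

theorem Zof_anti {K K' : Set (Finset ι)} (h : K ⊆ K') : Zof K' ⊆ Zof K :=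
  fun _ hγ k hk => hγ k (h hk)

theorem ind_symmDiff (a b : Finset ι) : ind (a ∆ b) = ind a + ind b := by
  ext q
  by_cases ha : q ∈ a <;> by_cases hb : q ∈ b <;> simp [ind, mem_symmDiff, ha, hb]
  decide

end General

theorem ind_supp (v : Q → ZMod 2) : ind (supp v) = v := by
  ext q
  simp only [ind, supp, mem_filter, mem_univ, true_and]
  generalize v q = c
  fin_cases c <;> rfl

theorem supp_ind (a : Finset Q) : supp (ind a) = a := by
  ext
  simp [supp, ind]

theorem dotProduct_ind (a b : Finset Q) : ind a ⬝ᵥ ind b = #(a ∩ b) := by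
  simp only [dotProduct, ind, mul_ite, mul_one, mul_zero, ← ite_and, sum_boole]
  congr 2
  ext
  simp [and_comm]

def IsSubgroup.toSubmodule {K : Set (Finset Q)} (hK : IsSubgroup K) :
    Submodule (ZMod 2) (Q → ZMod 2) where
  carrier := ind '' K
  zero_mem' := ⟨∅, hK.1, by ext; simp [ind]⟩
  add_mem' := by
    rintro _ _ ⟨a, ha, rfl⟩ ⟨b, hb, rfl⟩
    exact ⟨a ∆ b, hK.2 a ha b hb, ind_symmDiff a b⟩
  smul_mem' c x hx := by
    obtain rfl | rfl : c = 0 ∨ c = 1 := by revert c; decide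
    · exact ⟨∅, hK.1, by ext; simp [ind]⟩
    · rwa [one_smul]

theorem IsSubgroup.ind_mem_toSubmodule_iff {K : Set (Finset Q)} (hK : IsSubgroup K)
    {a : Finset Q} : ind a ∈ hK.toSubmodule ↔ a ∈ K := by
  refine ⟨?_, fun ha => ⟨a, ha, rfl⟩⟩
  rintro ⟨b, hb, hba⟩
  rwa [← supp_ind a, ← hba, supp_ind]

theorem IsSubgroup.toSubmodule_Zof {K : Set (Finset Q)} (hK : IsSubgroup K) :
    (isSubgroup_Zof K).toSubmodule =
      LinearMap.BilinForm.orthogonal (dotProductBilin (ZMod 2) (ZMod 2)) hK.toSubmodule := by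
  ext x
  obtain ⟨a, rfl⟩ : ∃ a, ind a = x := ⟨supp x, ind_supp x⟩
  rw [IsSubgroup.ind_mem_toSubmodule_iff, LinearMap.BilinForm.mem_orthogonal_iff]
  change _ ↔ ∀ n ∈ ind '' K, _
  simp only [Set.forall_mem_image, dotProductBilin_apply_apply,
    dotProduct_ind, ZMod.natCast_eq_zero_iff, inter_comm _ a]
  rfl

theorem dotProductBilin_nondegenerate {ι R : Type*} [Fintype ι] [DecidableEq ι] [CommRing R] :
    (dotProductBilin R R : LinearMap.BilinForm R (ι → R)).Nondegenerate :=
  ⟨fun x hx => funext fun q => by simpa using hx (Pi.single q 1),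
    fun y hy => funext fun q => by simpa using hy (Pi.single q 1)⟩

theorem dotProductBilin_isRefl {ι R : Type*} [Fintype ι] [CommRing R] :
    LinearMap.BilinForm.IsRefl (dotProductBilin R R : LinearMap.BilinForm R (ι → R)) :=
  fun x y h => by rwa [dotProductBilin_apply_apply, dotProduct_comm] at h

theorem Zof_Zof {K : Set (Finset Q)} (hK : IsSubgroup K) : Zof (Zof K) = K := by
  ext a
  rw [← (isSubgroup_Zof (Zof K)).ind_mem_toSubmodule_iff, (isSubgroup_Zof K).toSubmodule_Zof,
    hK.toSubmodule_Zof, LinearMap.BilinForm.orthogonal_orthogonal dotProductBilin_nondegenerate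
      dotProductBilin_isRefl, hK.ind_mem_toSubmodule_iff]

section Code

variable {C : CSS Q}

theorem SX_subset_ZX (C : CSS Q) : C.SX ⊆ ZX C :=
  fun b hb f hf => inter_comm f b ▸ C.comm f hf b hb

theorem SZ_subset_ZZ (C : CSS Q) : C.SZ ⊆ ZZ C :=
  fun a ha b hb => C.comm a ha b hb

theorem mem_SZ_iff {a : Finset Q} : a ∈ C.SZ ↔ ∀ γ ∈ ZX C, 2 ∣ #(a ∩ γ) := by
  rw [← Zof_Zof C.hSZ]
  rfl

theorem inter_mem_ZZ (hinter : Inter C) {γ δ : Finset Q} (hγ : γ ∈ ZX C) (hδ : δ ∈ ZX C) :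
    γ ∩ δ ∈ ZZ C := by
  rw [hinter]
  exact ⟨γ, hγ, δ, hδ, rfl⟩

theorem inter_mem_SZ_of_mem_SX (hinter : Inter C) {β γ : Finset Q} (hβ : β ∈ C.SX)
    (hγ : γ ∈ ZX C) : β ∩ γ ∈ C.SZ :=
  mem_SZ_iff.2 fun μ hμ => by
    rw [inter_assoc, inter_comm]
    exact inter_mem_ZZ hinter hγ hμ β hβ

theorem exists_logicalX (hsingle : SingleQubit C) : ∃ l, LogicalX C l :=
  Set.exists_of_ssubset ((SX_subset_ZX C).ssubset_of_ne hsingle.1.1.symm)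

theorem exists_logicalZ (hsingle : SingleQubit C) : ∃ z, LogicalZ C z :=
  Set.exists_of_ssubset ((SZ_subset_ZZ C).ssubset_of_ne hsingle.2.1.symm)

theorem LogicalX.symmDiff_of_mem_SX {l c : Finset Q} (hl : LogicalX C l) (hc : c ∈ C.SX) :
    LogicalX C (l ∆ c) :=
  ⟨(isSubgroup_Zof C.SZ).2 l hl.1 c (SX_subset_ZX C hc),
    fun h => hl.2 (symmDiff_symmDiff_cancel_right c l ▸ C.hSX.2 _ h c hc)⟩

theorem LogicalZ.symmDiff_of_mem_SZ {s z : Finset Q} (hz : LogicalZ C z) (hs : s ∈ C.SZ) :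
    LogicalZ C (s ∆ z) :=
  ⟨(isSubgroup_Zof C.SX).2 s (SZ_subset_ZZ C hs) z hz.1,
    fun h => hz.2 (symmDiff_symmDiff_cancel_left s z ▸ C.hSZ.2 s hs _ h)⟩

theorem two_dvd_card_inter_congr {a a' m : Finset Q} (hm : m ∈ ZZ C) (h : a ∆ a' ∈ C.SX) :
    2 ∣ #(a ∩ m) ↔ 2 ∣ #(a' ∩ m) :=
  (two_dvd_card_symmDiff_inter_iff a a' m).1 (inter_comm m _ ▸ hm _ h)

theorem LogicalX.not_two_dvd_card_inter (hsingle : SingleQubit C) {l z : Finset Q}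
    (hl : LogicalX C l) (hz : LogicalZ C z) : ¬ 2 ∣ #(l ∩ z) := by
  obtain ⟨γ, hγ, hodd⟩ : ∃ γ ∈ ZX C, ¬ 2 ∣ #(z ∩ γ) := by
    simpa [mem_SZ_iff] using hz.2
  have hγX : γ ∉ C.SX := fun h => hodd (hz.1 γ h)
  rw [two_dvd_card_inter_congr hz.1 (hsingle.1.2 l γ hl ⟨hγ, hγX⟩), inter_comm]
  exact hodd

theorem LogicalZ.exists_eq_inter (hinter : Inter C) {z : Finset Q} (hz : LogicalZ C z) :
    ∃ γ δ, LogicalX C γ ∧ LogicalX C δ ∧ z = γ ∩ δ := by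
  obtain ⟨γ, hγ, δ, hδ, rfl⟩ : ∃ γ ∈ ZX C, ∃ δ ∈ ZX C, z = γ ∩ δ := by
    have hzZZ := hz.1
    rwa [hinter] at hzZZ
  refine ⟨γ, δ, ⟨hγ, fun h => hz.2 ?_⟩, ⟨hδ, fun h => hz.2 ?_⟩, rfl⟩
  · exact inter_mem_SZ_of_mem_SX hinter h hδ
  · exact inter_comm δ γ ▸ inter_mem_SZ_of_mem_SX hinter h hγ

theorem LogicalZ.not_two_dvd_card (hsingle : SingleQubit C) (hinter : Inter C) {z : Finset Q}
    (hz : LogicalZ C z) : ¬ 2 ∣ #z := by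
  obtain ⟨γ, δ, hγ, -, rfl⟩ := hz.exists_eq_inter hinter
  simpa using hγ.not_two_dvd_card_inter hsingle hz

theorem not_two_dvd_card_inter_inter (hsingle : SingleQubit C) (hinter : Inter C)
    {l₁ l₂ l₃ : Finset Q} (h₁ : LogicalX C l₁) (h₂ : LogicalX C l₂) (h₃ : LogicalX C l₃) :
    ¬ 2 ∣ #(l₁ ∩ l₂ ∩ l₃) := by
  obtain ⟨z, hz⟩ := exists_logicalZ hsingle
  obtain ⟨γ, δ, hγ, hδ, rfl⟩ := hz.exists_eq_inter hinter
  rw [inter_assoc, two_dvd_card_inter_congr (inter_mem_ZZ hinter h₂.1 h₃.1)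
      (hsingle.1.2 l₁ γ h₁ hγ), inter_left_comm, two_dvd_card_inter_congr
      (inter_mem_ZZ hinter hγ.1 h₃.1) (hsingle.1.2 l₂ δ h₂ hδ)]
  have := h₃.not_two_dvd_card_inter hsingle hz
  rwa [inter_comm, inter_assoc, inter_left_comm] at this

theorem LogicalX.inter (hsingle : SingleQubit C) (hinter : Inter C) {l l' : Finset Q}
    (hl : LogicalX C l) (hl' : LogicalX C l') : LogicalZ C (l ∩ l') := by
  refine ⟨inter_mem_ZZ hinter hl.1 hl'.1, fun h => ?_⟩
  have hodd := not_two_dvd_card_inter_inter hsingle hinter hl hl' hl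
  have heven := hl.1 _ h
  rw [inter_right_comm, inter_self] at hodd
  rw [← inter_assoc, inter_self] at heven
  exact hodd heven

end Code

section Tolerance

variable {C : CSS Q} {α : Finset Q}

theorem inter_mem_G {β : Finset Q} (hβ : β ∈ ZX C) : α ∩ β ∈ G C α :=
  subset_closure _ (Or.inr ⟨β, hβ, rfl⟩)

theorem SZ_subset_G : C.SZ ⊆ G C α :=
  fun _ hs => subset_closure _ (Or.inl hs)

theorem mem_G_iff {z : Finset Q} : z ∈ G C α ↔ ∃ s ∈ C.SZ, ∃ β ∈ ZX C, z = s ∆ (α ∩ β) :=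
  mem_closure_union_inter_iff C.hSZ (isSubgroup_Zof C.SZ)

theorem mem_H_iff {z : Finset Q} : z ∈ H C α ↔ ∃ s ∈ C.SZ, ∃ β ∈ C.SX, z = s ∆ (α ∩ β) :=
  mem_closure_union_inter_iff C.hSZ C.hSX

theorem H_subset_G : H C α ⊆ G C α :=
  closure_mono (Set.union_subset_union_right _ fun _ ⟨β, hβ, hx⟩ => ⟨β, SX_subset_ZX C hβ, hx⟩)

theorem tolerable_iff : Tolerable C α ↔ ∀ β ∈ ZX C, ¬ LogicalZ C (α ∩ β) := by
  refine ⟨fun h β hβ => h _ (inter_mem_G hβ), fun h z hz hzZ => ?_⟩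
  obtain ⟨s, hs, β, hβ, rfl⟩ := mem_G_iff.1 hz
  exact h β hβ (symmDiff_symmDiff_cancel_left s (α ∩ β) ▸ hzZ.symmDiff_of_mem_SZ hs)

theorem mem_Zof_G_iff {l : Finset Q} (hl : l ∈ ZX C) : l ∈ Zof (G C α) ↔ α ∩ l ∈ C.SZ := by
  rw [mem_SZ_iff]
  constructor
  · intro h β hβ
    rw [inter_right_comm, inter_comm]
    exact h _ (inter_mem_G hβ)
  · intro h z hz
    obtain ⟨s, hs, β, hβ, rfl⟩ := mem_G_iff.1 hz
    have hαβ := h β hβ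
    rw [inter_right_comm, inter_comm] at hαβ
    exact (two_dvd_card_inter_symmDiff_iff l s _).2 (iff_of_true (hl s hs) hαβ)

theorem tolerable_of_mem_Zof_G (hsingle : SingleQubit C) {l : Finset Q} (hl : LogicalX C l)
    (h : l ∈ Zof (G C α)) : Tolerable C α :=
  fun z hz hzZ => hl.not_two_dvd_card_inter hsingle hzZ (h z hz)

theorem tolerable_of_inter_mem_SZ (hsingle : SingleQubit C) {l : Finset Q} (hl : LogicalX C l)
    (h : α ∩ l ∈ C.SZ) : Tolerable C α :=
  tolerable_of_mem_Zof_G hsingle hl ((mem_Zof_G_iff hl.1).2 h)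

theorem Tolerable.exists_logicalX_mem_Zof_G (hsingle : SingleQubit C) (htol : Tolerable C α) :
    ∃ l, LogicalX C l ∧ l ∈ Zof (G C α) := by
  by_contra! hnone
  have hZofG : Zof (G C α) ⊆ C.SX :=
    fun l hl => by_contra fun hlX => hnone l ⟨Zof_anti SZ_subset_G hl, hlX⟩ hl
  have hZZ : ZZ C ⊆ G C α :=
    calc ZZ C = Zof C.SX := rfl
      _ ⊆ Zof (Zof (G C α)) := Zof_anti hZofG
      _ = G C α := Zof_Zof (isSubgroup_closure _)
  exact hsingle.2.1 (Set.Subset.antisymm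
    (fun z hz => by_contra fun hzS => htol z (hZZ hz) ⟨hz, hzS⟩) (SZ_subset_ZZ C))

theorem G_subset_H_of_inter_mem_SZ (hsingle : SingleQubit C) {l : Finset Q} (hl : LogicalX C l)
    (h : α ∩ l ∈ C.SZ) : G C α ⊆ H C α := by
  refine closure_subset (isSubgroup_closure _)
    (Set.union_subset (fun s hs => subset_closure _ (Or.inl hs)) ?_)
  rintro _ ⟨β, hβ, rfl⟩
  by_cases hβX : β ∈ C.SX
  · exact subset_closure _ (Or.inr ⟨β, hβX, rfl⟩)
  · have hc : β ∆ l ∈ C.SX := hsingle.1.2 β l ⟨hβ, hβX⟩ hl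
    have hβl : α ∩ (β ∆ l) ∈ H C α := subset_closure _ (Or.inr ⟨_, hc, rfl⟩)
    have hαl : α ∩ l ∈ H C α := subset_closure _ (Or.inl h)
    have := (isSubgroup_closure _).2 _ hβl _ hαl
    rwa [← inter_symmDiff_distrib_left, symmDiff_symmDiff_cancel_right] at this

theorem exists_inter_mem_SZ_of_H_eq_G (hsingle : SingleQubit C) (h : H C α = G C α) :
    ∃ l, LogicalX C l ∧ α ∩ l ∈ C.SZ := by
  obtain ⟨l₀, hl₀⟩ := exists_logicalX hsingle
  obtain ⟨s, hs, c, hc, hsc⟩ := mem_H_iff.1 (h ▸ inter_mem_G hl₀.1)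
  refine ⟨l₀ ∆ c, hl₀.symmDiff_of_mem_SX hc, ?_⟩
  rwa [inter_symmDiff_distrib_left, hsc, symmDiff_symmDiff_cancel_right]

theorem not_tolerable_symmDiff_of_inter_mem_SZ (hsingle : SingleQubit C) (hinter : Inter C)
    {l₀ l : Finset Q} (hl₀ : LogicalX C l₀) (h₀ : α ∩ l₀ ∈ C.SZ) (hl : LogicalX C l) :
    ¬ Tolerable C (α ∆ l) := by
  intro htol
  apply htol _ (inter_mem_G hl₀.1)
  rw [inter_symmDiff_distrib_right]
  exact (hl.inter hsingle hinter hl₀).symmDiff_of_mem_SZ h₀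

theorem exists_tolerable_symmDiff_of_not_tolerable (hsingle : SingleQubit C) (hinter : Inter C)
    (h : ¬ Tolerable C α) : ∃ l, LogicalX C l ∧ Tolerable C (α ∆ l) := by
  obtain ⟨β, hβ, hz⟩ : ∃ β ∈ ZX C, LogicalZ C (α ∩ β) := by
    simpa [tolerable_iff] using h
  have hβX : β ∉ C.SX := fun hβX => hz.not_two_dvd_card hsingle hinter <| by
    simpa [inter_assoc] using hz.1 β hβX
  have hl : LogicalX C β := ⟨hβ, hβX⟩
  refine ⟨β, hl, tolerable_of_inter_mem_SZ hsingle hl ?_⟩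
  rw [inter_symmDiff_distrib_right, inter_self]
  exact hsingle.2.2 _ _ hz (inter_self β ▸ hl.inter hsingle hinter hl)

theorem symmDiff_inter_mem_SZ (hinter : Inter C) {l β : Finset Q} (hl : l ∈ ZX C)
    (h : α ∩ l ∈ C.SZ) (hβ : β ∈ C.SX) : α ∆ β ∩ l ∈ C.SZ := by
  rw [inter_symmDiff_distrib_right]
  exact C.hSZ.2 _ h _ (inter_mem_SZ_of_mem_SX hinter hβ hl)

end Tolerance

theorem tolerable_tfae_general
    (C : CSS Q) (hsingle : SingleQubit C) (hinter : Inter C)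
    (α : Finset Q) :
    List.TFAE
      [Tolerable C α,
       H C α = G C α,
       ∃ l, LogicalX C l ∧ α ∩ l ∈ C.SZ,
       ∃ l, LogicalX C l ∧ l ∈ Zof (G C α),
       ∀ l, LogicalX C l → ¬ Tolerable C (α ∆ l),
       ∀ β ∈ C.SX, Tolerable C (α ∆ β)] := by
  tfae_have 1 → 4 := fun h => h.exists_logicalX_mem_Zof_G hsingle
  tfae_have 4 → 1 := fun ⟨l, hl, h⟩ => tolerable_of_mem_Zof_G hsingle hl h
  tfae_have 3 ↔ 4 := exists_congr fun l => and_congr_right fun hl => (mem_Zof_G_iff hl.1).symm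
  tfae_have 3 → 2 := fun ⟨l, hl, h⟩ =>
    H_subset_G.antisymm (G_subset_H_of_inter_mem_SZ hsingle hl h)
  tfae_have 2 → 3 := exists_inter_mem_SZ_of_H_eq_G hsingle
  tfae_have 3 → 5 := fun ⟨_, hl₀, h₀⟩ _ hl =>
    not_tolerable_symmDiff_of_inter_mem_SZ hsingle hinter hl₀ h₀ hl
  tfae_have 5 → 1 := fun h => by_contra fun htol =>
    let ⟨l, hl, htl⟩ := exists_tolerable_symmDiff_of_not_tolerable hsingle hinter htol
    h l hl htl
  tfae_have 3 → 6 := fun ⟨l, hl, h⟩ β hβ =>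
    tolerable_of_inter_mem_SZ hsingle hl (symmDiff_inter_mem_SZ hinter hl.1 h hβ)
  tfae_have 6 → 1 := fun h => symmDiff_bot α ▸ h ∅ C.hSX.1
  tfae_finish

/-- Lemma 2: characterizations of tolerable errors. -/
theorem tolerable_tfae
    (C : CSS Q) (hdual : Dual C) (hsingle : SingleQubit C) (hinter : Inter C)
    (α : Finset Q) :
    List.TFAE
      [Tolerable C α,
       H C α = G C α,
       ∃ l, LogicalX C l ∧ α ∩ l ∈ C.SZ,
       ∃ l, LogicalX C l ∧ l ∈ Zof (G C α),
       ∀ l, LogicalX C l → ¬ Tolerable C (α ∆ l),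
       ∀ β ∈ C.SX, Tolerable C (α ∆ β)] :=
  tolerable_tfae_general C hsingle hinter α

end CC
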